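/- Let r ≥ 1, let π = (π_0, …, π_r) be a permutation of {0, …, r}, and let ξ_0, …, ξ_r be pairwise distinct real numbers with increment vector x = (ξ_1−ξ_0, …, ξ_r−ξ_{r−1})ᵀ ∈ ℝ^r. Then Π(ξ_0, …, ξ_r) = π if and only if V_π x ≤ 0 componentwise. -/

import Mathlib

open MeasureTheory ProbabilityTheory Filter Matrix
open scoped ENNReal NNReal Topology Classical

noncomputable section

/-- The `r × (r+1)` difference matrix `D` with `D_{i,i} = -1`, `D_{i,i+1} = 1`. -/
def diffMatrix (r : ℕ) : Matrix (Fin r) (Fin (r+1)) ℝ :=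
  Matrix.of fun i j => if j = i.castSucc then -1 else if j = i.succ then 1 else 0

/-- The `(r+1) × (r+1)` permutation matrix whose `i`-th row is `e_{π i}`. -/
def permMatrix {r : ℕ} (π : Fin (r+1) → Fin (r+1)) : Matrix (Fin (r+1)) (Fin (r+1)) ℝ :=
  Matrix.of fun i j => if j = π i then 1 else 0

/-- The `(r+1) × r` cumulative-sum matrix `C` with `C_{i,j} = 1` iff `i ≥ j+1`. -/
def cumMatrix (r : ℕ) : Matrix (Fin (r+1)) (Fin r) ℝ :=
  Matrix.of fun i j => if (j : ℕ) + 1 ≤ (i : ℕ) then 1 else 0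

/-- The matrix `V_π = D P_π C` associated with an ordinal pattern `π`. -/
def Vpi {r : ℕ} (π : Fin (r+1) → Fin (r+1)) : Matrix (Fin r) (Fin r) ℝ :=
  diffMatrix r * permMatrix π * cumMatrix r

/-- `IsOrdinalPattern ξ π` expresses that `π` is the ordinal pattern of `ξ`:
`π` is a bijection with `ξ_{π_0} ≥ ξ_{π_1} ≥ ⋯ ≥ ξ_{π_r}`, ties broken by
`π_{i-1} > π_i` whenever `ξ_{π_{i-1}} = ξ_{π_i}`. -/
def IsOrdinalPattern {r : ℕ} (ξ : Fin (r+1) → ℝ) (π : Fin (r+1) → Fin (r+1)) : Prop :=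
  Function.Bijective π ∧
    ∀ i : Fin r, ξ (π i.succ) ≤ ξ (π i.castSucc) ∧
      (ξ (π i.castSucc) = ξ (π i.succ) → π i.succ < π i.castSucc)

/-! `C` turns the increment vector of `ξ` into `(ξ_j - ξ_0)_j`, `P_π` reorders it to
`(ξ_{π_j} - ξ_0)_j`, and `D` takes consecutive differences, so that
`(V_π x)_i = ξ_{π_i} - ξ_{π_{i-1}}`. Hence `V_π x ≤ 0` says exactly `ξ_{π_0} ≥ ⋯ ≥ ξ_{π_r}`,
and for pairwise distinct values the tie-breaking rule of ordinal patterns is vacuous. -/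

lemma diffMatrix_mulVec {r : ℕ} (v : Fin (r+1) → ℝ) :
    diffMatrix r *ᵥ v = fun i => v i.succ - v i.castSucc := by
  ext i
  have hne : i.succ ≠ i.castSucc := Fin.castSucc_lt_succ.ne'
  have hentry : ∀ j, diffMatrix r i j =
      (if j = i.succ then (1 : ℝ) else 0) - if j = i.castSucc then 1 else 0 := by
    intro j
    by_cases h : j = i.castSucc <;> simp [diffMatrix, h, hne.symm]
  simp only [mulVec, dotProduct, hentry, sub_mul, Finset.sum_sub_distrib,
    ite_mul, one_mul, zero_mul, Finset.sum_ite_eq', Finset.mem_univ, if_true]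

lemma permMatrix_mulVec {r : ℕ} (π : Fin (r+1) → Fin (r+1)) (v : Fin (r+1) → ℝ) :
    permMatrix π *ᵥ v = v ∘ π := by
  ext i
  simp [permMatrix, mulVec, dotProduct]

lemma cumMatrix_mulVec_increments {r : ℕ} (ξ : Fin (r+1) → ℝ) :
    cumMatrix r *ᵥ (fun i => ξ i.succ - ξ i.castSucc) = fun j => ξ j - ξ 0 := by
  ext j
  simp only [cumMatrix, mulVec, dotProduct, of_apply, ite_mul, one_mul, zero_mul,
    ← Finset.sum_filter]
  cases j using Fin.cases with
  | zero => simp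
  | succ a =>
    rw [← Fin.sum_Iic_sub a ξ]
    congr 1
    ext k
    simp only [Finset.mem_filter, Finset.mem_univ, true_and, Finset.mem_Iic, Fin.val_succ,
      Fin.le_def]
    omega

lemma Vpi_mulVec_increments {r : ℕ} (π : Fin (r+1) → Fin (r+1)) (ξ : Fin (r+1) → ℝ) :
    Vpi π *ᵥ (fun i => ξ i.succ - ξ i.castSucc) = fun i => ξ (π i.succ) - ξ (π i.castSucc) := by
  rw [Vpi, ← mulVec_mulVec, ← mulVec_mulVec, cumMatrix_mulVec_increments, permMatrix_mulVec,
    diffMatrix_mulVec]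
  ext i
  simp

lemma isOrdinalPattern_iff_of_injective {r : ℕ} {ξ : Fin (r+1) → ℝ} (hξ : Function.Injective ξ)
    {π : Fin (r+1) → Fin (r+1)} (hπ : Function.Bijective π) :
    IsOrdinalPattern ξ π ↔ ∀ i : Fin r, ξ (π i.succ) ≤ ξ (π i.castSucc) := by
  have no_ties (i : Fin r) : ξ (π i.castSucc) ≠ ξ (π i.succ) :=
    (hξ.comp hπ.injective).ne Fin.castSucc_lt_succ.ne
  simp only [IsOrdinalPattern, hπ, true_and]
  exact forall_congr' fun i => and_iff_left_of_imp fun _ h => absurd h (no_ties i)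

theorem statement_2_general (r : ℕ) (π : Equiv.Perm (Fin (r+1)))
    (ξ : Fin (r+1) → ℝ) (hdist : Function.Injective ξ) :
    IsOrdinalPattern ξ (fun i => π i) ↔
      (Vpi (fun i => π i)).mulVec (fun i : Fin r => ξ i.succ - ξ i.castSucc) ≤ 0 := by
  rw [isOrdinalPattern_iff_of_injective hdist π.bijective, Vpi_mulVec_increments, Pi.le_def]
  simp only [Pi.zero_apply, sub_nonpos]

/-- For pairwise distinct values, `Π(ξ_0, …, ξ_r) = π` iff
`V_π x ≤ 0` componentwise, where `x` is the increment vector of `ξ`. -/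
theorem statement_2 (r : ℕ) (hr : 1 ≤ r) (π : Equiv.Perm (Fin (r+1)))
    (ξ : Fin (r+1) → ℝ) (hdist : Function.Injective ξ) :
    IsOrdinalPattern ξ (fun i => π i) ↔
      (Vpi (fun i => π i)).mulVec (fun i : Fin r => ξ i.succ - ξ i.castSucc) ≤ 0 :=
  statement_2_general r π ξ hdist
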